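/- Let (θ_{i,j})_{i,j≥1} be a coagulation kernel satisfying (K1). Let f^{in} ∈ X_1^+, let (n_k) be a sequence of integers with n_k → ∞, and for each k let f^{n_k} be the nonnegative global solution of the truncated RBK system of size n_k with initial data f_i^{n_k}(0) = f_i^{in} for 1 ≤ i ≤ n_k. Suppose that for each i ≥ 1 and each t ≥ 0, f_i^{n_k}(t) → f_i(t) as k → ∞ for some functions f_i : [0,∞) → [0,∞). Then for every T ∈ (0,∞) and every r ≥ 1, ∫_0^T ( Σ_{j=r}^{∞} ω_j f_j(s) )^2 ds ≤ 2 r^{−1/2} ‖f^{in}‖_1; in particular Σ_{j=r}^{∞} ω_j f_j ∈ L^2(0,T). -/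

import Mathlib

/-!
Weighting the `i`-th equation of the truncated system by `i`, the first moment
`M(t) = ∑ i fᵢ(t)` satisfies `M' = -∑_{i,j} min(i,j) θᵢⱼ fᵢ fⱼ`, and by (K1) this dissipation
dominates `r (∑_{j ≥ r} ωⱼ fⱼ)²`. Integrating over `[0,T]` bounds `r ∫ (∑_{r ≤ j ≤ n} ωⱼ fⱼⁿ)²`
by `M(0) ≤ ‖f^{in}‖₁`, uniformly in the truncation. Fatou's lemma, applied first to the sum
over `j` and then to the time integral, carries the bound to the limit, and `1/r ≤ 2/√r`.
-/

open MeasureTheory Finset Filter Topology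
open scoped ENNReal

/-- `IsTruncRBKOn θ n I f` : the family `(f i)_{1 ≤ i ≤ n}` solves the truncated
Redner–Ben-Avraham–Kahng coagulation system of size `n` with kernel `θ` on the set `I`:
`df_i/dt = ∑_{j=1}^{n-i} θ_{i+j,j} f_{i+j} f_j − ∑_{j=1}^{n} θ_{i,j} f_i f_j`. -/
def IsTruncRBKOn (θ : ℕ → ℕ → ℝ) (n : ℕ) (I : Set ℝ) (f : ℕ → ℝ → ℝ) : Prop :=
  ∀ i ∈ Finset.Icc 1 n, ∀ t ∈ I,
    HasDerivWithinAt (f i)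
      ((∑ j ∈ Finset.Icc 1 (n - i), θ (i + j) j * f (i + j) t * f j t)
        - ∑ j ∈ Finset.Icc 1 n, θ i j * f i t * f j t) I t

def truncRBKRhs (θ : ℕ → ℕ → ℝ) (n : ℕ) (x : ℕ → ℝ) (i : ℕ) : ℝ :=
  (∑ j ∈ Icc 1 (n - i), θ (i + j) j * x (i + j) * x j) - ∑ j ∈ Icc 1 n, θ i j * x i * x j

theorem sum_Icc_sum_Icc_sub_eq_sum_filter {M : Type*} [AddCommMonoid M] (n : ℕ)
    (h : ℕ → ℕ → M) :
    ∑ i ∈ Icc 1 n, ∑ j ∈ Icc 1 (n - i), h (i + j) j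
      = ∑ p ∈ (Icc 1 n ×ˢ Icc 1 n).filter (fun p => p.2 < p.1), h p.1 p.2 := by
  rw [sum_sigma']
  refine sum_nbij' (fun a => (a.1 + a.2, a.2)) (fun p => ⟨p.1 - p.2, p.2⟩) ?_ ?_ ?_ ?_ ?_
  all_goals
    simp only [mem_sigma, mem_filter, mem_product, mem_Icc, Sigma.forall, Prod.forall,
      Sigma.mk.injEq, Prod.mk.injEq, heq_eq_eq, and_true, implies_true]
  all_goals intro a b h; omega

theorem sum_natCast_mul_truncRBKRhs (θ : ℕ → ℕ → ℝ) (n : ℕ) (x : ℕ → ℝ) :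
    ∑ i ∈ Icc 1 n, (i : ℝ) * truncRBKRhs θ n x i
      = -∑ p ∈ Icc 1 n ×ˢ Icc 1 n, ((min p.1 p.2 : ℕ) : ℝ) * θ p.1 p.2 * x p.1 * x p.2 := by
  have gain : ∑ i ∈ Icc 1 n, (i : ℝ) * ∑ j ∈ Icc 1 (n - i), θ (i + j) j * x (i + j) * x j
      = ∑ p ∈ Icc 1 n ×ˢ Icc 1 n, ((p.1 - p.2 : ℕ) : ℝ) * θ p.1 p.2 * x p.1 * x p.2 :=
    calc _ = ∑ p ∈ (Icc 1 n ×ˢ Icc 1 n).filter (fun p => p.2 < p.1),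
          ((p.1 - p.2 : ℕ) : ℝ) * θ p.1 p.2 * x p.1 * x p.2 := by
          rw [← sum_Icc_sum_Icc_sub_eq_sum_filter n
            fun a b => ((a - b : ℕ) : ℝ) * θ a b * x a * x b]
          simp_rw [mul_sum, Nat.add_sub_cancel, mul_assoc]
      -- the pairs with `p.1 ≤ p.2` contribute nothing, since `p.1 - p.2 = 0` in `ℕ`
      _ = _ := sum_filter_of_ne fun p _ hp => by_contra fun h => hp <| by
          simp [Nat.sub_eq_zero_of_le (not_lt.1 h)]
  have loss : ∑ i ∈ Icc 1 n, (i : ℝ) * ∑ j ∈ Icc 1 n, θ i j * x i * x j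
      = ∑ p ∈ Icc 1 n ×ˢ Icc 1 n, (p.1 : ℝ) * θ p.1 p.2 * x p.1 * x p.2 := by
    simp_rw [sum_product, mul_sum, mul_assoc]
  simp only [truncRBKRhs, mul_sub, sum_sub_distrib, gain, loss]
  rw [← sum_sub_distrib, ← sum_neg_distrib]
  refine sum_congr rfl fun p _ => ?_
  have : ((p.1 - p.2 : ℕ) : ℝ) + (min p.1 p.2 : ℕ) = p.1 := by
    exact_mod_cast tsub_add_min (a := p.1) (b := p.2)
  linear_combination (θ p.1 p.2 * x p.1 * x p.2) * this

theorem natCast_mul_sq_sum_Icc_le_sum_min_mul {θ : ℕ → ℕ → ℝ} {ω x : ℕ → ℝ} {n r : ℕ}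
    (hr : 1 ≤ r) (hω : ∀ i, 1 ≤ i → 0 ≤ ω i) (hθ : ∀ i j, 1 ≤ i → 1 ≤ j → ω i * ω j ≤ θ i j)
    (hx : ∀ i ∈ Icc 1 n, 0 ≤ x i) :
    (r : ℝ) * (∑ j ∈ Icc r n, ω j * x j) ^ 2
      ≤ ∑ p ∈ Icc 1 n ×ˢ Icc 1 n, ((min p.1 p.2 : ℕ) : ℝ) * θ p.1 p.2 * x p.1 * x p.2 := by
  have hsub : Icc r n ⊆ Icc 1 n := Icc_subset_Icc_left hr
  rw [sq, sum_mul_sum, ← sum_product', mul_sum]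
  refine (sum_le_sum fun p hp => ?_).trans
    (sum_le_sum_of_subset_of_nonneg (product_subset_product hsub hsub) fun p hp _ => ?_)
  · obtain ⟨h1, h2⟩ := mem_product.1 hp
    have hr_min : (r : ℝ) ≤ (min p.1 p.2 : ℕ) := by
      exact_mod_cast le_min (mem_Icc.1 h1).1 (mem_Icc.1 h2).1
    have hp1 := (mem_Icc.1 (hsub h1)).1
    have hp2 := (mem_Icc.1 (hsub h2)).1
    have hxx := mul_nonneg (hx _ (hsub h1)) (hx _ (hsub h2))
    calc (r : ℝ) * (ω p.1 * x p.1 * (ω p.2 * x p.2))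
        = r * (ω p.1 * ω p.2) * (x p.1 * x p.2) := by ring
      _ ≤ (min p.1 p.2 : ℕ) * θ p.1 p.2 * (x p.1 * x p.2) := by
        gcongr
        · exact mul_nonneg (hω _ hp1) (hω _ hp2)
        · exact hθ _ _ hp1 hp2
      _ = _ := by ring
  · obtain ⟨h1, h2⟩ := mem_product.1 hp
    have hp1 := (mem_Icc.1 h1).1
    have hp2 := (mem_Icc.1 h2).1
    have hθ₀ := (mul_nonneg (hω _ hp1) (hω _ hp2)).trans (hθ _ _ hp1 hp2)
    exact mul_nonneg (mul_nonneg (mul_nonneg (Nat.cast_nonneg _) hθ₀) (hx _ h1)) (hx _ h2)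

theorem ENNReal.tsum_le_liminf_tsum {ι κ : Type*} {l : Filter κ} [l.NeBot]
    {x : κ → ι → ℝ≥0∞} {y : ι → ℝ≥0∞} (h : ∀ i, Tendsto (fun k => x k i) l (𝓝 (y i))) :
    ∑' i, y i ≤ liminf (fun k => ∑' i, x k i) l := by
  rw [ENNReal.tsum_eq_iSup_sum]
  refine iSup_le fun s => ?_
  rw [← (tendsto_finsetSum s fun i _ => h i).liminf_eq]
  exact liminf_le_liminf (Eventually.of_forall fun k => ENNReal.sum_le_tsum s)

theorem lintegral_pow_le_liminf_of_le_liminf {α ι : Type*} [MeasurableSpace α] {μ : Measure α}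
    {l : Filter ι} [l.NeBot] [l.IsCountablyGenerated] {a : ι → α → ℝ≥0∞} {b : α → ℝ≥0∞}
    (ha : ∀ k, AEMeasurable (a k) μ) (hb : ∀ᵐ s ∂μ, b s ≤ liminf (fun k => a k s) l) (p : ℕ) :
    ∫⁻ s, b s ^ p ∂μ ≤ liminf (fun k => ∫⁻ s, a k s ^ p ∂μ) l :=
  calc ∫⁻ s, b s ^ p ∂μ ≤ ∫⁻ s, liminf (fun k => a k s ^ p) l ∂μ := by
        refine lintegral_mono_ae (hb.mono fun s hs => ?_)
        calc b s ^ p ≤ liminf (fun k => a k s) l ^ p := pow_le_pow_left' hs p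
          _ = _ := (pow_left_mono p).map_liminf_of_continuousAt _
            (ENNReal.continuous_pow p).continuousAt
    _ ≤ _ := lintegral_liminf_le' fun k => (ha k).pow_const p

theorem tsum_eq_toReal_tsum_ofReal {ι : Type*} {w : ι → ℝ} (hw : ∀ i, 0 ≤ w i) :
    ∑' i, w i = (∑' i, ENNReal.ofReal (w i)).toReal := by
  rw [ENNReal.tsum_toReal_eq fun _ => ENNReal.ofReal_ne_top]
  simp_rw [ENNReal.toReal_ofReal (hw _)]

theorem integrable_toReal_and_integral_le {α : Type*} [MeasurableSpace α] {μ : Measure α}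
    {H : α → ℝ≥0∞} (hH : AEMeasurable H μ) {C : ℝ} (hC : 0 ≤ C)
    (h : ∫⁻ s, H s ∂μ ≤ ENNReal.ofReal C) :
    Integrable (fun s => (H s).toReal) μ ∧ ∫ s, (H s).toReal ∂μ ≤ C := by
  have hfin : ∫⁻ s, H s ∂μ ≠ ∞ := ne_top_of_le_ne_top ENNReal.ofReal_ne_top h
  refine ⟨integrable_toReal_of_lintegral_ne_top hH hfin, ?_⟩
  rw [integral_toReal hH (ae_lt_top' hH hfin)]
  exact ENNReal.toReal_le_of_le_ofReal hC h

theorem aemeasurable_restrict_of_eventually_continuousOn {α : Type*} [TopologicalSpace α]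
    [MeasurableSpace α] [OpensMeasurableSpace α] {μ : Measure α} {s : Set α}
    (hs : MeasurableSet s) {F : ℕ → α → ℝ} {g : α → ℝ}
    (hF : ∀ᶠ k in atTop, ContinuousOn (F k) s)
    (hFg : ∀ t ∈ s, Tendsto (fun k => F k t) atTop (𝓝 (g t))) :
    AEMeasurable g (μ.restrict s) := by
  obtain ⟨k₀, hk₀⟩ := eventually_atTop.1 hF
  exact aemeasurable_of_tendsto_metrizable_ae atTop
    (fun m => (hk₀ (m + k₀) le_add_self).aemeasurable hs)
    (ae_restrict_of_forall_mem hs fun t ht => (hFg t ht).comp (tendsto_add_atTop_nat k₀))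

theorem tsum_ofReal_le_liminf_ofReal_sum_Icc {N : ℕ → ℕ} (hN : Tendsto N atTop atTop) {r : ℕ}
    {u : ℕ → ℕ → ℝ} {v : ℕ → ℝ} (hu : ∀ k, ∀ j ∈ Icc r (N k), 0 ≤ u k j)
    (huv : ∀ j, r ≤ j → Tendsto (fun k => u k j) atTop (𝓝 (v j))) :
    ∑' j, ENNReal.ofReal (if r ≤ j then v j else 0)
      ≤ liminf (fun k => ENNReal.ofReal (∑ j ∈ Icc r (N k), u k j)) atTop := by
  have hsum : ∀ k, ∑' j, ENNReal.ofReal (if j ∈ Icc r (N k) then u k j else 0)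
      = ENNReal.ofReal (∑ j ∈ Icc r (N k), u k j) := fun k => by
    rw [tsum_eq_sum (s := Icc r (N k)) fun j hj => by rw [if_neg hj, ENNReal.ofReal_zero],
      ENNReal.ofReal_sum_of_nonneg (hu k)]
    exact sum_congr rfl fun j hj => by rw [if_pos hj]
  simp_rw [← hsum]
  refine ENNReal.tsum_le_liminf_tsum fun j => ?_
  by_cases hj : r ≤ j
  · rw [if_pos hj]
    refine (ENNReal.tendsto_ofReal (huv j hj)).congr' ?_
    filter_upwards [hN.eventually_ge_atTop j] with k hk
    rw [if_pos (mem_Icc.2 ⟨hj, hk⟩)]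
  · simp [hj]

theorem lintegral_pow_tsum_ofReal_le_of_tendsto {α : Type*} [MeasurableSpace α]
    {μ : Measure α} {N : ℕ → ℕ} (hN : Tendsto N atTop atTop) {r : ℕ} {u : ℕ → ℕ → α → ℝ}
    {v : ℕ → α → ℝ} (hu_meas : ∀ k, AEMeasurable (fun s => ∑ j ∈ Icc r (N k), u k j s) μ)
    (hu_nonneg : ∀ᵐ s ∂μ, ∀ k, ∀ j ∈ Icc r (N k), 0 ≤ u k j s)
    (huv : ∀ᵐ s ∂μ, ∀ j, r ≤ j → Tendsto (fun k => u k j s) atTop (𝓝 (v j s)))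
    {p : ℕ} {C : ℝ≥0∞}
    (hC : ∀ k, ∫⁻ s, ENNReal.ofReal (∑ j ∈ Icc r (N k), u k j s) ^ p ∂μ ≤ C) :
    ∫⁻ s, (∑' j, ENNReal.ofReal (if r ≤ j then v j s else 0)) ^ p ∂μ ≤ C :=
  (lintegral_pow_le_liminf_of_le_liminf
    (fun k => ENNReal.measurable_ofReal.comp_aemeasurable (hu_meas k))
    ((hu_nonneg.and huv).mono fun _ hs => tsum_ofReal_le_liminf_ofReal_sum_Icc hN hs.1 hs.2)
    p).trans (liminf_le_of_frequently_le' (.of_forall hC))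

theorem integrable_pow_tsum_and_integral_le {α ι : Type*} [MeasurableSpace α] [Countable ι]
    {μ : Measure α} {w : ι → α → ℝ} (hw : ∀ᵐ s ∂μ, ∀ j, 0 ≤ w j s)
    (hw_meas : ∀ j, AEMeasurable (w j) μ) {p : ℕ} {C : ℝ} (hC : 0 ≤ C)
    (h : ∫⁻ s, (∑' j, ENNReal.ofReal (w j s)) ^ p ∂μ ≤ ENNReal.ofReal C) :
    Integrable (fun s => (∑' j, w j s) ^ p) μ ∧ ∫ s, (∑' j, w j s) ^ p ∂μ ≤ C := by
  have heq : (fun s => ((∑' j, ENNReal.ofReal (w j s)) ^ p).toReal)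
      =ᵐ[μ] fun s => (∑' j, w j s) ^ p :=
    hw.mono fun s hs => by dsimp only; rw [ENNReal.toReal_pow, ← tsum_eq_toReal_tsum_ofReal hs]
  obtain ⟨hint, hle⟩ := integrable_toReal_and_integral_le
    ((AEMeasurable.tsum fun j => (hw_meas j).ennreal_ofReal).pow_const p) hC h
  exact ⟨hint.congr heq, (integral_congr_ae heq).ge.trans hle⟩

namespace IsTruncRBKOn

variable {θ : ℕ → ℕ → ℝ} {n : ℕ} {I : Set ℝ} {f : ℕ → ℝ → ℝ}

theorem continuousOn (hf : IsTruncRBKOn θ n I f) {i : ℕ} (hi : i ∈ Icc 1 n) :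
    ContinuousOn (f i) I :=
  fun t ht => (hf i hi t ht).continuousWithinAt

theorem continuousOn_sum_Icc (hf : IsTruncRBKOn θ n I f) {r : ℕ} (hr : 1 ≤ r) (c : ℕ → ℝ) :
    ContinuousOn (fun t => ∑ j ∈ Icc r n, c j * f j t) I :=
  continuousOn_finsetSum _ fun _ hj =>
    continuousOn_const.mul (hf.continuousOn (Icc_subset_Icc_left hr hj))

theorem hasDerivWithinAt_moment (hf : IsTruncRBKOn θ n I f) {t : ℝ} (ht : t ∈ I) :
    HasDerivWithinAt (fun t => ∑ i ∈ Icc 1 n, (i : ℝ) * f i t)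
      (-∑ p ∈ Icc 1 n ×ˢ Icc 1 n, ((min p.1 p.2 : ℕ) : ℝ) * θ p.1 p.2 * f p.1 t * f p.2 t)
      I t := by
  rw [← sum_natCast_mul_truncRBKRhs θ n (f · t)]
  exact HasDerivWithinAt.fun_sum fun i hi => (hf i hi t ht).const_mul (i : ℝ)

theorem natCast_mul_integral_sq_sum_Icc_le (hf : IsTruncRBKOn θ n (Set.Ici 0) f)
    (hf₀ : ∀ i ∈ Icc 1 n, ∀ t ∈ Set.Ici (0 : ℝ), 0 ≤ f i t) {ω : ℕ → ℝ}
    (hω : ∀ i, 1 ≤ i → 0 ≤ ω i) (hθ : ∀ i j, 1 ≤ i → 1 ≤ j → ω i * ω j ≤ θ i j)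
    {T : ℝ} (hT : 0 ≤ T) {r : ℕ} (hr : 1 ≤ r) :
    (r : ℝ) * ∫ s in (0 : ℝ)..T, (∑ j ∈ Icc r n, ω j * f j s) ^ 2
      ≤ ∑ i ∈ Icc 1 n, (i : ℝ) * f i 0 := by
  set M : ℝ → ℝ := fun t => ∑ i ∈ Icc 1 n, (i : ℝ) * f i t
  have hM : ContinuousOn M (Set.Ici 0) := by
    simpa using hf.continuousOn_sum_Icc le_rfl (fun i => (i : ℝ))
  have hdiss := intervalIntegral.integral_le_sub_of_hasDeriv_right_of_le hT
    (g := fun t => -M t) (φ := fun s => r * (∑ j ∈ Icc r n, ω j * f j s) ^ 2)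
    (hM.neg.mono Set.Icc_subset_Ici_self)
    (fun t ht => (hf.hasDerivWithinAt_moment (Set.mem_Ici.2 ht.1.le)).neg.mono
      (Set.Ioi_subset_Ici ht.1.le))
    ((continuousOn_const.mul ((hf.continuousOn_sum_Icc hr ω).pow 2)).mono
      Set.Icc_subset_Ici_self).integrableOn_Icc
    (fun t ht => (natCast_mul_sq_sum_Icc_le_sum_min_mul hr hω hθ
      fun i hi => hf₀ i hi t (Set.mem_Ici.2 ht.1.le)).trans (neg_neg _).ge)
  have hMT : 0 ≤ M T := sum_nonneg fun i hi => mul_nonneg i.cast_nonneg (hf₀ i hi T hT)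
  rw [intervalIntegral.integral_const_mul] at hdiss
  linarith

theorem lintegral_ofReal_sum_Icc_sq_le (hf : IsTruncRBKOn θ n (Set.Ici 0) f)
    (hf₀ : ∀ i ∈ Icc 1 n, ∀ t ∈ Set.Ici (0 : ℝ), 0 ≤ f i t) {ω : ℕ → ℝ}
    (hω : ∀ i, 1 ≤ i → 0 ≤ ω i) (hθ : ∀ i j, 1 ≤ i → 1 ≤ j → ω i * ω j ≤ θ i j)
    {T : ℝ} (hT : 0 ≤ T) {r : ℕ} (hr : 1 ≤ r) :
    ∫⁻ s in Set.Ioc 0 T, ENNReal.ofReal (∑ j ∈ Icc r n, ω j * f j s) ^ 2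
      ≤ ENNReal.ofReal ((∑ i ∈ Icc 1 n, (i : ℝ) * f i 0) / r) := by
  have hr₀ : (0 : ℝ) < r := by exact_mod_cast hr
  have hcont : ContinuousOn (fun s => (∑ j ∈ Icc r n, ω j * f j s) ^ 2) (Set.Icc 0 T) :=
    ((hf.continuousOn_sum_Icc hr ω).pow 2).mono Set.Icc_subset_Ici_self
  calc _ ≤ ∫⁻ s in Set.Ioc 0 T, ENNReal.ofReal ((∑ j ∈ Icc r n, ω j * f j s) ^ 2) :=
        lintegral_mono fun s => by
          rcases le_total 0 (∑ j ∈ Icc r n, ω j * f j s) with h | h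
          · rw [ENNReal.ofReal_pow h]
          · simp [ENNReal.ofReal_of_nonpos h]
    _ = ENNReal.ofReal (∫ s in (0 : ℝ)..T, (∑ j ∈ Icc r n, ω j * f j s) ^ 2) := by
        rw [intervalIntegral.integral_of_le hT, ofReal_integral_eq_lintegral_ofReal
          (hcont.integrableOn_Icc.mono_set Set.Ioc_subset_Icc_self)
          (.of_forall fun s => sq_nonneg _)]
    _ ≤ _ := ENNReal.ofReal_le_ofReal <| (le_div_iff₀ hr₀).2 <| by
        rw [mul_comm]
        exact hf.natCast_mul_integral_sq_sum_Icc_le hf₀ hω hθ hT hr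

end IsTruncRBKOn

theorem intervalIntegrable_sq_tsum_and_integral_le_of_tendsto {N : ℕ → ℕ}
    (hN : Tendsto N atTop atTop) {F : ℕ → ℕ → ℝ → ℝ} {f : ℕ → ℝ → ℝ} {ω : ℕ → ℝ} {r : ℕ}
    (hr : 1 ≤ r) (hω : ∀ j, 1 ≤ j → 0 ≤ ω j)
    (hF : ∀ k, ∀ j ∈ Icc 1 (N k), ContinuousOn (F k j) (Set.Ici 0))
    (hF₀ : ∀ k, ∀ j ∈ Icc 1 (N k), ∀ t ∈ Set.Ici (0 : ℝ), 0 ≤ F k j t)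
    (hf₀ : ∀ j, 1 ≤ j → ∀ t ∈ Set.Ici (0 : ℝ), 0 ≤ f j t)
    (hFf : ∀ j, 1 ≤ j → ∀ t ∈ Set.Ici (0 : ℝ), Tendsto (fun k => F k j t) atTop (𝓝 (f j t)))
    {T C : ℝ} (hT : 0 ≤ T) (hC : 0 ≤ C)
    (hbound : ∀ k, ∫⁻ s in Set.Ioc 0 T, ENNReal.ofReal (∑ j ∈ Icc r (N k), ω j * F k j s) ^ 2
      ≤ ENNReal.ofReal C) :
    IntervalIntegrable (fun s => (∑' j, if r ≤ j then ω j * f j s else 0) ^ 2) volume 0 T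
      ∧ ∫ s in (0 : ℝ)..T, (∑' j, if r ≤ j then ω j * f j s else 0) ^ 2 ≤ C := by
  have hIoc : Set.Ioc 0 T ⊆ Set.Ici (0 : ℝ) := fun s hs => Set.mem_Ici.2 hs.1.le
  have hlim := lintegral_pow_tsum_ofReal_le_of_tendsto hN (v := fun j s => ω j * f j s)
    (fun k => ((continuousOn_finsetSum _ fun j hj => continuousOn_const.mul
      ((hF k j (Icc_subset_Icc_left hr hj)).mono hIoc)).aemeasurable measurableSet_Ioc))
    (ae_restrict_of_forall_mem measurableSet_Ioc fun s hs k j hj =>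
      mul_nonneg (hω j (hr.trans (mem_Icc.1 hj).1))
        (hF₀ k j (Icc_subset_Icc_left hr hj) s (hIoc hs)))
    (ae_restrict_of_forall_mem measurableSet_Ioc fun s hs j hj =>
      (hFf j (hr.trans hj) s (hIoc hs)).const_mul (ω j)) hbound
  have hf_meas : ∀ j, AEMeasurable (fun s => if r ≤ j then ω j * f j s else 0)
      (volume.restrict (Set.Ioc 0 T)) := fun j => by
    by_cases hj : r ≤ j
    · simp only [if_pos hj]
      exact aemeasurable_const.mul <| aemeasurable_restrict_of_eventually_continuousOn
        measurableSet_Ioc ((hN.eventually_ge_atTop j).mono fun k hk =>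
          (hF k j (mem_Icc.2 ⟨hr.trans hj, hk⟩)).mono hIoc)
        fun t ht => hFf j (hr.trans hj) t (hIoc ht)
    · simp only [if_neg hj, aemeasurable_const]
  have hw₀ : ∀ᵐ s ∂volume.restrict (Set.Ioc 0 T), ∀ j, 0 ≤ if r ≤ j then ω j * f j s else 0 :=
    ae_restrict_of_forall_mem measurableSet_Ioc fun s hs j => by
      split_ifs with hj
      · exact mul_nonneg (hω j (hr.trans hj)) (hf₀ j (hr.trans hj) s (hIoc hs))
      · exact le_rfl
  obtain ⟨hint, hle⟩ := integrable_pow_tsum_and_integral_le hw₀ hf_meas hC hlim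
  exact ⟨(intervalIntegrable_iff_integrableOn_Ioc_of_le hT).2 hint,
    (intervalIntegral.integral_of_le hT).trans_le hle⟩

theorem inv_natCast_le_two_mul_inv_sqrt {r : ℕ} (hr : 1 ≤ r) : (r : ℝ)⁻¹ ≤ 2 * (√r)⁻¹ := by
  have hr' : (1 : ℝ) ≤ r := by exact_mod_cast hr
  have hsqrt : 1 ≤ √(r : ℝ) := Real.one_le_sqrt.2 hr'
  have : √(r : ℝ) ≤ r := (Real.sqrt_le_left (by linarith)).2 (by nlinarith)
  calc (r : ℝ)⁻¹ ≤ (√r)⁻¹ := inv_anti₀ (by linarith) this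
    _ ≤ 2 * (√r)⁻¹ := by linarith [inv_nonneg.2 (Real.sqrt_nonneg (r : ℝ))]

theorem truncRBK_omega_tail_L2_general
    (θ : ℕ → ℕ → ℝ) (ω : ℕ → ℝ) (κ : ℕ → ℕ → ℝ)
    -- (K1)
    (hK1 : ∀ i j : ℕ, 1 ≤ i → 1 ≤ j → θ i j = ω i * ω j + κ i j)
    (hω_nonneg : ∀ i : ℕ, 1 ≤ i → 0 ≤ ω i)
    (hκ_nonneg : ∀ i j : ℕ, 1 ≤ i → 1 ≤ j → 0 ≤ κ i j)
    -- f^{in} ∈ X₁⁺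
    (fin : ℕ → ℝ) (hfin_nonneg : ∀ i : ℕ, 1 ≤ i → 0 ≤ fin i)
    (hfin_summable : Summable (fun i : ℕ => (i : ℝ) * fin i))
    -- the sequence of truncated solutions
    (nk : ℕ → ℕ) (hnk : Tendsto nk atTop atTop)
    (F : ℕ → ℕ → ℝ → ℝ)
    (hF : ∀ k : ℕ, IsTruncRBKOn θ (nk k) (Set.Ici 0) (F k))
    (hFinit : ∀ k : ℕ, ∀ i ∈ Finset.Icc 1 (nk k), F k i 0 = fin i)
    (hF_nonneg : ∀ k : ℕ, ∀ i ∈ Finset.Icc 1 (nk k), ∀ t ∈ Set.Ici (0:ℝ), 0 ≤ F k i t)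
    -- pointwise convergence to a nonnegative limit f
    (f : ℕ → ℝ → ℝ)
    (hf_nonneg : ∀ i : ℕ, 1 ≤ i → ∀ t ∈ Set.Ici (0:ℝ), 0 ≤ f i t)
    (hconv : ∀ i : ℕ, 1 ≤ i → ∀ t ∈ Set.Ici (0:ℝ),
      Tendsto (fun k => F k i t) atTop (nhds (f i t)))
    (T : ℝ) (hT : 0 < T) (r : ℕ) (hr : 1 ≤ r) :
    IntervalIntegrable
        (fun s => (∑' j : ℕ, if r ≤ j then ω j * f j s else 0) ^ 2)
        MeasureTheory.volume 0 T
    ∧ ∫ s in (0:ℝ)..T, (∑' j : ℕ, if r ≤ j then ω j * f j s else 0) ^ 2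
        ≤ 2 * (Real.sqrt r)⁻¹ * ∑' j : ℕ, (j : ℝ) * fin j := by
  have hθ : ∀ i j, 1 ≤ i → 1 ≤ j → ω i * ω j ≤ θ i j := fun i j hi hj => by
    linarith [hK1 i j hi hj, hκ_nonneg i j hi hj]
  have hterm : ∀ j : ℕ, 0 ≤ (j : ℝ) * fin j := fun j => by
    rcases j.eq_zero_or_pos with rfl | hj
    · simp
    · exact mul_nonneg j.cast_nonneg (hfin_nonneg j hj)
  have hr₀ : (0 : ℝ) < r := by exact_mod_cast hr
  set B := ∑' j : ℕ, (j : ℝ) * fin j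
  have hbound : ∀ k, ∫⁻ s in Set.Ioc 0 T,
      ENNReal.ofReal (∑ j ∈ Icc r (nk k), ω j * F k j s) ^ 2 ≤ ENNReal.ofReal (B / r) := by
    intro k
    refine ((hF k).lintegral_ofReal_sum_Icc_sq_le (hF_nonneg k) hω_nonneg hθ hT.le hr).trans
      (ENNReal.ofReal_le_ofReal (div_le_div_of_nonneg_right ?_ hr₀.le))
    rw [sum_congr rfl fun i hi => by rw [hFinit k i hi]]
    exact hfin_summable.sum_le_tsum _ fun i _ => hterm i
  obtain ⟨hint, hle⟩ := intervalIntegrable_sq_tsum_and_integral_le_of_tendsto hnk hr hω_nonneg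
    (fun k j hj => (hF k).continuousOn hj) hF_nonneg hf_nonneg hconv hT.le
    (div_nonneg (tsum_nonneg hterm) hr₀.le) hbound
  refine ⟨hint, hle.trans ?_⟩
  rw [div_eq_inv_mul]
  exact mul_le_mul_of_nonneg_right (inv_natCast_le_two_mul_inv_sqrt hr) (tsum_nonneg hterm)

/-- Under (K1), for `f^{in} ∈ X₁⁺` and a sequence of truncated solutions
`f^{n_k}` (with `n_k → ∞`) converging pointwise to some nonnegative `f`, for every
`T > 0` and `r ≥ 1`, `∫_0^T (∑_{j≥r} ω_j f_j(s))² ds ≤ 2 r^{−1/2} ‖f^{in}‖₁`;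
in particular `∑_{j≥r} ω_j f_j ∈ L²(0,T)`. -/
theorem truncRBK_omega_tail_L2
    (θ : ℕ → ℕ → ℝ) (ω : ℕ → ℝ) (κ : ℕ → ℕ → ℝ)
    (hθ_symm : ∀ i j : ℕ, 1 ≤ i → 1 ≤ j → θ i j = θ j i)
    -- (K1)
    (hK1 : ∀ i j : ℕ, 1 ≤ i → 1 ≤ j → θ i j = ω i * ω j + κ i j)
    (hω_nonneg : ∀ i : ℕ, 1 ≤ i → 0 ≤ ω i)
    (hκ_nonneg : ∀ i j : ℕ, 1 ≤ i → 1 ≤ j → 0 ≤ κ i j)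
    (hκ_symm : ∀ i j : ℕ, 1 ≤ i → 1 ≤ j → κ i j = κ j i)
    -- f^{in} ∈ X₁⁺
    (fin : ℕ → ℝ) (hfin_nonneg : ∀ i : ℕ, 1 ≤ i → 0 ≤ fin i)
    (hfin_summable : Summable (fun i : ℕ => (i : ℝ) * fin i))
    -- the sequence of truncated solutions
    (nk : ℕ → ℕ) (hnk : Tendsto nk atTop atTop)
    (F : ℕ → ℕ → ℝ → ℝ)
    (hF : ∀ k : ℕ, IsTruncRBKOn θ (nk k) (Set.Ici 0) (F k))
    (hFinit : ∀ k : ℕ, ∀ i ∈ Finset.Icc 1 (nk k), F k i 0 = fin i)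
    (hF_nonneg : ∀ k : ℕ, ∀ i ∈ Finset.Icc 1 (nk k), ∀ t ∈ Set.Ici (0:ℝ), 0 ≤ F k i t)
    -- pointwise convergence to a nonnegative limit f
    (f : ℕ → ℝ → ℝ)
    (hf_nonneg : ∀ i : ℕ, 1 ≤ i → ∀ t ∈ Set.Ici (0:ℝ), 0 ≤ f i t)
    (hconv : ∀ i : ℕ, 1 ≤ i → ∀ t ∈ Set.Ici (0:ℝ),
      Tendsto (fun k => F k i t) atTop (nhds (f i t)))
    (T : ℝ) (hT : 0 < T) (r : ℕ) (hr : 1 ≤ r) :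
    IntervalIntegrable
        (fun s => (∑' j : ℕ, if r ≤ j then ω j * f j s else 0) ^ 2)
        MeasureTheory.volume 0 T
    ∧ ∫ s in (0:ℝ)..T, (∑' j : ℕ, if r ≤ j then ω j * f j s else 0) ^ 2
        ≤ 2 * (Real.sqrt r)⁻¹ * ∑' j : ℕ, (j : ℝ) * fin j :=
  truncRBK_omega_tail_L2_general θ ω κ hK1 hω_nonneg hκ_nonneg fin hfin_nonneg hfin_summable nk hnk
    F hF hFinit hF_nonneg f hf_nonneg hconv T hT r hr
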